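/- (Proposition 1 of the paper.) Let n ≥ 1 and let 𝓜ₙ denote the cone of positive semidefinite symmetric real n×n matrices. For M₁, M₂ ∈ 𝓜ₙ set τ(M₁, M₂) := min{(1/n)trace(M) : M ∈ 𝓜ₙ, M ≥ M₁, M ≥ M₂} and δ(M₁, M₂) := 2τ(M₁, M₂) − (1/n)(trace(M₁) + trace(M₂)). Then δ is a metric on 𝓜ₙ: it is nonnegative, symmetric, vanishes exactly on the diagonal, and satisfies the triangle inequality. -/

import Mathlib

open Matrix Finset

open scoped MatrixOrder in
theorem Matrix.posSemidef_iff_eq_transpose_mul_self {n : Type*} [Fintype n] [DecidableEq n]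
    {A : Matrix n n ℝ} : A.PosSemidef ↔ ∃ B : Matrix n n ℝ, A = Bᴴ * B := by
  constructor
  · intro hA
    obtain ⟨B, hB⟩ := CStarAlgebra.nonneg_iff_eq_star_mul_self.mp hA.nonneg
    exact ⟨B, hB⟩
  · rintro ⟨B, rfl⟩; exact posSemidef_conjTranspose_mul_self B

section helpers

variable {n : ℕ}

lemma quad_nonneg' {A : Matrix (Fin n) (Fin n) ℝ} (hA : A.PosSemidef)
    (v : Fin n → ℝ) : 0 ≤ v ⬝ᵥ A *ᵥ v := by
  simpa using hA.dotProduct_mulVec_nonneg v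

lemma psd_trace_nonneg' {A : Matrix (Fin n) (Fin n) ℝ} (hA : A.PosSemidef) :
    0 ≤ A.trace := by
  obtain ⟨B, rfl⟩ := Matrix.posSemidef_iff_eq_transpose_mul_self.mp hA
  simp only [Matrix.trace, Matrix.diag, Matrix.mul_apply, Matrix.conjTranspose_apply,
    star_trivial]
  refine Finset.sum_nonneg fun i _ => Finset.sum_nonneg fun j _ => mul_self_nonneg _

lemma quad_le_trace' {A : Matrix (Fin n) (Fin n) ℝ} (hA : A.PosSemidef)
    (v : Fin n → ℝ) : v ⬝ᵥ A *ᵥ v ≤ (v ⬝ᵥ v) * A.trace := by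
  obtain ⟨B, rfl⟩ := Matrix.posSemidef_iff_eq_transpose_mul_self.mp hA
  have hBt : Bᴴ = Bᵀ := by ext i j; simp [Matrix.conjTranspose_apply]
  have h1 : v ⬝ᵥ (Bᴴ * B) *ᵥ v = (B *ᵥ v) ⬝ᵥ (B *ᵥ v) := by
    rw [hBt, ← Matrix.mulVec_mulVec, Matrix.dotProduct_mulVec, Matrix.vecMul_transpose]
  have h2 : (Bᴴ * B).trace = ∑ j, ∑ i, (B j i) ^ 2 := by
    rw [hBt]
    simp only [Matrix.trace, Matrix.diag, Matrix.mul_apply, Matrix.transpose_apply]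
    rw [Finset.sum_comm]
    exact Finset.sum_congr rfl fun j _ => Finset.sum_congr rfl fun i _ => (sq (B j i)).symm
  rw [h1, h2]
  have h3 : (B *ᵥ v) ⬝ᵥ (B *ᵥ v) = ∑ j, (∑ i, B j i * v i) ^ 2 := by
    simp [dotProduct, Matrix.mulVec, sq]
  rw [h3, Finset.mul_sum]
  refine Finset.sum_le_sum fun j _ => ?_
  calc (∑ i, B j i * v i) ^ 2 ≤ (∑ i, (B j i) ^ 2) * ∑ i, v i ^ 2 :=
        Finset.sum_mul_sq_le_sq_mul_sq _ _ _
    _ = v ⬝ᵥ v * ∑ i, B j i ^ 2 := by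
        rw [mul_comm]; congr 1; simp [dotProduct, sq]

lemma polarization' {D : Matrix (Fin n) (Fin n) ℝ} (hD : Dᴴ = D)
    (h : ∀ v : Fin n → ℝ, v ⬝ᵥ D *ᵥ v = 0) : D = 0 := by
  ext i j
  have hsym : D j i = D i j := by
    conv_lhs => rw [← hD]
    simp [Matrix.conjTranspose_apply]
  have hii : D i i = 0 := by
    have := h (Pi.single i 1)
    simpa [dotProduct, Matrix.mulVec, Pi.single_apply] using this
  have hjj : D j j = 0 := by
    have := h (Pi.single j 1)
    simpa [dotProduct, Matrix.mulVec, Pi.single_apply] using this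
  have hij := h (Pi.single i 1 + Pi.single j 1)
  simp only [dotProduct, Matrix.mulVec, Pi.add_apply, Pi.single_apply,
    dotProduct, mul_add, add_mul, mul_ite, ite_mul, one_mul, zero_mul, mul_one,
    mul_zero, Finset.sum_add_distrib, Finset.sum_ite_eq', Finset.mem_univ, if_true] at hij
  simp only [Matrix.zero_apply]
  rw [hsym] at hij
  linarith [hii, hjj, hij]

end helpers

/-- `τ(M₁, M₂)`: the minimal normalized trace over the cone `𝓜ₙ` of positive
semidefinite matrices dominating both `M₁` and `M₂` in the Loewner order. -/
noncomputable def tau (n : ℕ) (M₁ M₂ : Matrix (Fin n) (Fin n) ℝ) : ℝ :=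
  sInf {x : ℝ | ∃ M : Matrix (Fin n) (Fin n) ℝ,
    M.PosSemidef ∧ (M - M₁).PosSemidef ∧ (M - M₂).PosSemidef ∧
    x = (n : ℝ)⁻¹ * M.trace}

/-- `δ(M₁, M₂) := 2τ(M₁, M₂) - (1/n)(trace M₁ + trace M₂)`. -/
noncomputable def delta (n : ℕ) (M₁ M₂ : Matrix (Fin n) (Fin n) ℝ) : ℝ :=
  2 * tau n M₁ M₂ - (n : ℝ)⁻¹ * (M₁.trace + M₂.trace)

section tauFacts

variable {n : ℕ} (M₁ M₂ : Matrix (Fin n) (Fin n) ℝ)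

/-- The feasible set of normalized traces. -/
def tauSet : Set ℝ :=
  {x : ℝ | ∃ M : Matrix (Fin n) (Fin n) ℝ,
    M.PosSemidef ∧ (M - M₁).PosSemidef ∧ (M - M₂).PosSemidef ∧
    x = (n : ℝ)⁻¹ * M.trace}

lemma tau_eq_sInf : tau n M₁ M₂ = sInf (tauSet M₁ M₂) := rfl

variable {M₁ M₂}

lemma tauSet_nonempty (h₁ : M₁.PosSemidef) (h₂ : M₂.PosSemidef) :
    (tauSet M₁ M₂).Nonempty := by
  refine ⟨(n : ℝ)⁻¹ * (M₁ + M₂).trace, M₁ + M₂, h₁.add h₂, ?_, ?_, rfl⟩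
  · rw [add_sub_cancel_left]; exact h₂
  · rw [add_sub_cancel_right]; exact h₁

lemma tauSet_lb (x : ℝ) (hx : x ∈ tauSet M₁ M₂) :
    (n : ℝ)⁻¹ * (M₁.trace + M₂.trace) / 2 ≤ x := by
  obtain ⟨M, hM, h1, h2, rfl⟩ := hx
  have t1 : 0 ≤ (M - M₁).trace := psd_trace_nonneg' h1
  have t2 : 0 ≤ (M - M₂).trace := psd_trace_nonneg' h2
  rw [Matrix.trace_sub] at t1 t2
  have hninv : (0:ℝ) ≤ (n : ℝ)⁻¹ := by positivity
  nlinarith [t1, t2, hninv]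

lemma tauSet_bddBelow : BddBelow (tauSet M₁ M₂) :=
  ⟨_, fun x hx => tauSet_lb x hx⟩

lemma tau_lb (h₁ : M₁.PosSemidef) (h₂ : M₂.PosSemidef) :
    (n : ℝ)⁻¹ * (M₁.trace + M₂.trace) / 2 ≤ tau n M₁ M₂ :=
  le_csInf (tauSet_nonempty h₁ h₂) (fun x hx => tauSet_lb x hx)

lemma delta_nonneg (h₁ : M₁.PosSemidef) (h₂ : M₂.PosSemidef) :
    0 ≤ delta n M₁ M₂ := by
  have := tau_lb h₁ h₂
  unfold delta
  linarith

lemma tauSet_comm : tauSet M₁ M₂ = tauSet M₂ M₁ := by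
  ext x
  exact ⟨fun ⟨M, h, ha, hb, hx⟩ => ⟨M, h, hb, ha, hx⟩,
    fun ⟨M, h, ha, hb, hx⟩ => ⟨M, h, hb, ha, hx⟩⟩

lemma tau_self (hn : 1 ≤ n) (h₁ : M₁.PosSemidef) :
    tau n M₁ M₁ = (n : ℝ)⁻¹ * M₁.trace := by
  refine le_antisymm ?_ ?_
  · refine csInf_le tauSet_bddBelow ⟨M₁, h₁, ?_, ?_, rfl⟩ <;>
      (rw [sub_self]; exact Matrix.PosSemidef.zero)
  · have := tau_lb h₁ h₁
    linarith [this]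

/-- The key lower bound: any feasible `x` dominates the quadratic form gap. -/
lemma key_bound (hn : 1 ≤ n) (v : Fin n → ℝ) (x : ℝ) (hx : x ∈ tauSet M₁ M₂) :
    |v ⬝ᵥ (M₁ - M₂) *ᵥ v| ≤ (v ⬝ᵥ v) * (2 * (n : ℝ) * x - M₁.trace - M₂.trace) := by
  obtain ⟨M, hM, h1, h2, rfl⟩ := hx
  have hnR : (0:ℝ) < (n : ℝ) := by exact_mod_cast Nat.pos_of_ne_zero (by omega)
  have hA : ((M - M₁) + (M - M₂)).PosSemidef := h1.add h2
  have ht := quad_le_trace' hA v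
  have q1 := quad_nonneg' h1 v
  have q2 := quad_nonneg' h2 v
  have htr : ((M - M₁) + (M - M₂)).trace = 2 * M.trace - M₁.trace - M₂.trace := by
    rw [Matrix.trace_add, Matrix.trace_sub, Matrix.trace_sub]; ring
  have hxtr : 2 * (n : ℝ) * ((n : ℝ)⁻¹ * M.trace) = 2 * M.trace := by
    field_simp
  simp only [Matrix.add_mulVec, Matrix.sub_mulVec, dotProduct_add,
    dotProduct_sub, htr] at ht q1 q2 ⊢
  rw [hxtr]
  rw [abs_le]
  constructor <;> nlinarith [ht, q1, q2]

end tauFacts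

/-- Proposition 1: `δ` is a metric on the cone `𝓜ₙ` of positive semidefinite
symmetric real `n×n` matrices: nonnegative, symmetric, vanishing exactly on the
diagonal, and satisfying the triangle inequality. -/
theorem delta_is_metric (n : ℕ) (hn : 1 ≤ n) :
    (∀ M₁ M₂ : Matrix (Fin n) (Fin n) ℝ, M₁.PosSemidef → M₂.PosSemidef →
      0 ≤ delta n M₁ M₂) ∧
    (∀ M₁ M₂ : Matrix (Fin n) (Fin n) ℝ, M₁.PosSemidef → M₂.PosSemidef →
      delta n M₁ M₂ = delta n M₂ M₁) ∧
    (∀ M₁ M₂ : Matrix (Fin n) (Fin n) ℝ, M₁.PosSemidef → M₂.PosSemidef →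
      (delta n M₁ M₂ = 0 ↔ M₁ = M₂)) ∧
    (∀ M₁ M₂ M₃ : Matrix (Fin n) (Fin n) ℝ,
      M₁.PosSemidef → M₂.PosSemidef → M₃.PosSemidef →
      delta n M₁ M₃ ≤ delta n M₁ M₂ + delta n M₂ M₃) := by
  have hnR : (0:ℝ) < (n : ℝ) := by exact_mod_cast Nat.pos_of_ne_zero (by omega)
  refine ⟨fun M₁ M₂ h₁ h₂ => delta_nonneg h₁ h₂, ?_, ?_, ?_⟩
  · -- symmetry
    intro M₁ M₂ h₁ h₂
    unfold delta
    rw [tau_eq_sInf, tau_eq_sInf, tauSet_comm, add_comm]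
  · -- vanishing iff equal
    intro M₁ M₂ h₁ h₂
    constructor
    · intro hδ
      have hD : (M₁ - M₂)ᴴ = M₁ - M₂ := by
        rw [Matrix.conjTranspose_sub, h₁.1, h₂.1]
      have hq : ∀ v : Fin n → ℝ, v ⬝ᵥ (M₁ - M₂) *ᵥ v = 0 := by
        intro v
        by_cases hv : v = 0
        · simp [hv]
        · have hnn : (0:ℝ) ≤ v ⬝ᵥ v :=
            Finset.sum_nonneg fun i _ => mul_self_nonneg _
          have hc : (0:ℝ) < v ⬝ᵥ v := by
            rcases lt_or_eq_of_le hnn with h | h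
            · exact h
            · exact absurd (dotProduct_self_eq_zero.mp h.symm) hv
          set q := |v ⬝ᵥ (M₁ - M₂) *ᵥ v| with hq_def
          have hlb : (M₁.trace + M₂.trace + q / (v ⬝ᵥ v)) / (2 * (n:ℝ)) ≤ tau n M₁ M₂ := by
            rw [tau_eq_sInf]
            refine le_csInf (tauSet_nonempty h₁ h₂) (fun x hx => ?_)
            have hk := key_bound hn v x hx
            have h1 : q / (v ⬝ᵥ v) ≤ 2 * (n:ℝ) * x - M₁.trace - M₂.trace :=
              (div_le_iff₀ hc).mpr (by rw [mul_comm]; exact hk)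
            rw [div_le_iff₀ (by positivity)]
            linarith
          have h2 : M₁.trace + M₂.trace + q / (v ⬝ᵥ v) ≤ tau n M₁ M₂ * (2 * (n:ℝ)) :=
            (div_le_iff₀ (by positivity)).mp hlb
          have h3 : 2 * tau n M₁ M₂ = (n : ℝ)⁻¹ * (M₁.trace + M₂.trace) := by
            unfold delta at hδ; linarith
          have h4 : tau n M₁ M₂ * (2 * (n:ℝ)) = M₁.trace + M₂.trace := by
            calc tau n M₁ M₂ * (2 * (n:ℝ)) = (2 * tau n M₁ M₂) * (n:ℝ) := by ring
              _ = ((n:ℝ)⁻¹ * (M₁.trace + M₂.trace)) * (n:ℝ) := by rw [h3]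
              _ = M₁.trace + M₂.trace := by field_simp
          have h5 : q / (v ⬝ᵥ v) ≤ 0 := by linarith
          have h6 : q ≤ 0 := by
            have := (div_le_iff₀ hc).mp h5
            simpa using this
          exact abs_nonpos_iff.mp h6
      have := polarization' hD hq
      exact sub_eq_zero.mp this
    · rintro rfl
      unfold delta
      rw [tau_self hn h₁]
      ring
  · -- triangle inequality
    intro M₁ M₂ M₃ h₁ h₂ h₃
    have key13 : ∀ x ∈ tauSet M₁ M₂, ∀ y ∈ tauSet M₂ M₃,
        tau n M₁ M₃ ≤ x + y - (n : ℝ)⁻¹ * M₂.trace := by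
      rintro x ⟨M, hM, ha, hb, rfl⟩ y ⟨N, hN, hc, hd, rfl⟩
      have hP : (M + N - M₂).PosSemidef := by
        have h' : M + N - M₂ = M₁ + ((M - M₁) + (N - M₂)) := by abel
        rw [h']
        exact h₁.add (ha.add hc)
      have hP1 : (M + N - M₂ - M₁).PosSemidef := by
        have h' : M + N - M₂ - M₁ = (M - M₁) + (N - M₂) := by abel
        rw [h']
        exact ha.add hc
      have hP3 : (M + N - M₂ - M₃).PosSemidef := by
        have h' : M + N - M₂ - M₃ = (M - M₂) + (N - M₃) := by abel
        rw [h']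
        exact hb.add hd
      have hmem : (n : ℝ)⁻¹ * (M + N - M₂).trace ∈ tauSet M₁ M₃ :=
        ⟨M + N - M₂, hP, hP1, hP3, rfl⟩
      have := csInf_le tauSet_bddBelow hmem
      rw [tau_eq_sInf]
      refine le_trans this (le_of_eq ?_)
      rw [Matrix.trace_sub, Matrix.trace_add]
      ring
    have step1 : ∀ y ∈ tauSet M₂ M₃,
        tau n M₁ M₃ + (n : ℝ)⁻¹ * M₂.trace - y ≤ tau n M₁ M₂ := by
      intro y hy
      rw [tau_eq_sInf M₁ M₂]
      refine le_csInf (tauSet_nonempty h₁ h₂) (fun x hx => ?_)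
      linarith [key13 x hx y hy]
    have step2 : tau n M₁ M₃ + (n : ℝ)⁻¹ * M₂.trace - tau n M₁ M₂ ≤ tau n M₂ M₃ := by
      rw [tau_eq_sInf M₂ M₃]
      refine le_csInf (tauSet_nonempty h₂ h₃) (fun y hy => ?_)
      linarith [step1 y hy]
    unfold delta
    linarith
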